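/- Let Φ be a root system of type Eₙ (n = 6,7,8) or F₄ with highest root φ, polar node i₀, and let w₁ be the longest element of the parabolic subgroup of the Weyl group generated by {s_i : i ≠ i₀}, and w₀ the longest element of W. Then s_φ = w₁w₀, and both elements have inversion set {α ∈ Φ⁺ : ⟨α, ω_{i₀}⟩ > 0}. -/

import Mathlib

open scoped RealInnerProductSpace Pointwise

namespace Paper

variable {V : Type*} [NormedAddCommGroup V] [InnerProductSpace ℝ V]

/-- The orthogonal reflection in the hyperplane perpendicular to `α`
(by convention the identity if `α = 0`). -/
noncomputable def sref (α : V) : V ≃ₗ[ℝ] V :=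
  letI := Classical.propDecidable (α = 0)
  if h : α = 0 then LinearEquiv.refl ℝ V
  else
    Module.reflection (x := α) (f := (2 / ⟪α, α⟫) • (innerₛₗ ℝ α)) <| by
      have h' : ⟪α, α⟫ ≠ 0 := inner_self_ne_zero.mpr h
      have h2 : ((2 / ⟪α, α⟫) • (innerₛₗ ℝ α)) α = (2 / ⟪α, α⟫) * ⟪α, α⟫ := by
        simp
      rw [h2, div_mul_cancel₀ _ h']

/-- `Φ` is a (finite, reduced, crystallographic) root system in the real inner
product space `V`. -/
structure IsRootSystem (Φ : Set V) : Prop where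
  finite : Φ.Finite
  nonzero : (0 : V) ∉ Φ
  span_top : Submodule.span ℝ Φ = ⊤
  neg_mem : ∀ α ∈ Φ, -α ∈ Φ
  refl_mem : ∀ α ∈ Φ, ∀ β ∈ Φ, sref α β ∈ Φ
  crystallographic : ∀ α ∈ Φ, ∀ β ∈ Φ, ∃ m : ℤ, 2 * ⟪α, β⟫ / ⟪β, β⟫ = (m : ℝ)
  reduced : ∀ α ∈ Φ, ∀ t : ℝ, t • α ∈ Φ → t = 1 ∨ t = -1

/-- Irreducibility of a root system. -/
def IsIrreducible (Φ : Set V) : Prop :=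
  ∀ Φ₁ Φ₂ : Set V, Φ = Φ₁ ∪ Φ₂ → (∀ α ∈ Φ₁, ∀ β ∈ Φ₂, ⟪α, β⟫ = 0) →
    Φ₁ = ∅ ∨ Φ₂ = ∅

/-- `αs` is a system of simple roots for `Φ`, with corresponding set `Pos` of
positive roots. -/
structure IsBase {n : ℕ} (Φ : Set V) (αs : Fin n → V) (Pos : Set V) : Prop where
  mem : ∀ i, αs i ∈ Φ
  indep : LinearIndependent ℝ αs
  span_eq : Submodule.span ℝ (Set.range αs) = ⊤
  pos_subset : Pos ⊆ Φ
  mem_pos_iff : ∀ β ∈ Φ, (β ∈ Pos ↔ ∃ c : Fin n → ℕ, β = ∑ i, (c i : ℝ) • αs i)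
  pos_or_neg : ∀ β ∈ Φ, β ∈ Pos ∨ -β ∈ Pos

/-- The Weyl group of `Φ`: the subgroup of `GL(V)` generated by the reflections
in the roots. -/
noncomputable def weylGroup (Φ : Set V) : Subgroup (V ≃ₗ[ℝ] V) :=
  Subgroup.closure (sref '' Φ)

/-- The standard parabolic subgroup generated by the simple reflections `sref (αs i)`
for `i ∈ J`. -/
noncomputable def parab {n : ℕ} (αs : Fin n → V) (J : Set (Fin n)) :
    Subgroup (V ≃ₗ[ℝ] V) :=
  Subgroup.closure ((fun i => sref (αs i)) '' J)

/-- The inversion set `Φ(w) = {β ∈ Φ⁺ : w⁻¹ β ∈ −Φ⁺}`. -/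
def invSet (Pos : Set V) (w : V ≃ₗ[ℝ] V) : Set V :=
  {β ∈ Pos | -(w⁻¹ β) ∈ Pos}

/-- The length of a Weyl group element, as the number of inversions. -/
noncomputable def len (Pos : Set V) (w : V ≃ₗ[ℝ] V) : ℕ :=
  (invSet Pos w).ncard

/-- `φ` is the highest root of the positive system `Pos` with simple roots `αs`. -/
def IsHighestRoot {n : ℕ} (αs : Fin n → V) (Pos : Set V) (φ : V) : Prop :=
  φ ∈ Pos ∧ ∀ β ∈ Pos, ∃ c : Fin n → ℕ, φ - β = ∑ i, (c i : ℝ) • αs i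

/-- Adjacency in the Bourbaki-labelled Dynkin diagram of the `E`-series (nodes `1,…,8`). -/
def eAdj (i j : ℕ) : Prop :=
  (i, j) ∈ ([(1,3),(3,1),(3,4),(4,3),(4,5),(5,4),(5,6),(6,5),(6,7),(7,6),(7,8),(8,7),(2,4),(4,2)] :
    List (ℕ × ℕ))

instance (i j : ℕ) : Decidable (eAdj i j) := by unfold eAdj; infer_instance

/-- Cartan integers of the `E`-series (Bourbaki labelling, nodes `1,…,8`):
`E₆`, `E₇` and `E₈` are obtained by restricting to nodes `1,…,n`. -/
def cartanE (i j : ℕ) : ℝ :=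
  if i = j then 2 else if eAdj i j then -1 else 0

/-- Cartan integers of `F₄` (Bourbaki labelling, nodes `1,…,4`; `α₁, α₂` long,
`α₃, α₄` short), with the convention `C i j = 2(αᵢ,αⱼ)/(αⱼ,αⱼ)`. -/
def cartanF (i j : ℕ) : ℝ :=
  if i = j then 2 else
  if (i, j) ∈ ([(1,2),(2,1),(3,2),(3,4),(4,3)] : List (ℕ × ℕ)) then -1 else
  if (i, j) = (2,3) then -2 else 0

/-- Cartan integers of `Aₙ` (nodes `1,…,n`). -/
def cartanA (i j : ℕ) : ℝ :=
  if i = j then 2 else if i + 1 = j ∨ j + 1 = i then -1 else 0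

/-- The simple roots `αs` realise the Cartan matrix `C` (indexed by nodes `1,…,n`). -/
def CartanIs {n : ℕ} (αs : Fin n → V) (C : ℕ → ℕ → ℝ) : Prop :=
  ∀ i j : Fin n, 2 * ⟪αs i, αs j⟫ / ⟪αs j, αs j⟫ = C ((i : ℕ) + 1) ((j : ℕ) + 1)


/-! ### Auxiliary lemmas -/

set_option linter.unusedSectionVars false

section AuxBasic

variable {V : Type*} [NormedAddCommGroup V] [InnerProductSpace ℝ V]


lemma inner_self_pos' {x : V} (hx : x ≠ 0) : (0:ℝ) < ⟪x, x⟫ :=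
  lt_of_le_of_ne real_inner_self_nonneg (fun h => hx (inner_self_eq_zero.mp h.symm))

lemma mul_apply' (g h : V ≃ₗ[ℝ] V) (x : V) : (g * h) x = g (h x) := rfl

lemma apply_inv_apply (g : V ≃ₗ[ℝ] V) (x : V) : g (g⁻¹ x) = x := g.apply_symm_apply x

lemma inv_apply_apply (g : V ≃ₗ[ℝ] V) (x : V) : g⁻¹ (g x) = x := g.symm_apply_apply x

lemma sref_apply (α : V) (hα : α ≠ 0) (x : V) :
    sref α x = x - (2 * ⟪α, x⟫ / ⟪α, α⟫) • α := by
  rw [sref, dif_neg hα, Module.reflection_apply]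
  simp only [LinearMap.smul_apply, innerₛₗ_apply_apply, smul_eq_mul]
  ring_nf

lemma sref_orth (α : V) (x : V) (h : ⟪α, x⟫ = 0) : sref α x = x := by
  by_cases hα : α = 0
  · rw [sref, dif_pos hα]; rfl
  · rw [sref_apply α hα, h]; simp

lemma sref_self (α : V) (hα : α ≠ 0) : sref α α = -α := by
  have h' : ⟪α, α⟫ ≠ 0 := inner_self_ne_zero.mpr hα
  rw [sref_apply α hα, mul_div_assoc, div_self h', mul_one, two_smul]
  abel

lemma sref_inner (α : V) (x y : V) : ⟪sref α x, sref α y⟫ = ⟪x, y⟫ := by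
  by_cases hα : α = 0
  · rw [sref, dif_pos hα]; rfl
  · have h' : ⟪α, α⟫ ≠ 0 := inner_self_ne_zero.mpr hα
    rw [sref_apply α hα, sref_apply α hα]
    simp only [inner_sub_left, inner_sub_right, real_inner_smul_left, real_inner_smul_right]
    rw [real_inner_comm x α, real_inner_comm y α]
    field_simp
    ring

lemma sref_sref (α : V) (x : V) : sref α (sref α x) = x := by
  by_cases hα : α = 0
  · rw [sref, dif_pos hα]; rfl
  · have h' : ⟪α, α⟫ ≠ 0 := inner_self_ne_zero.mpr hα
    rw [sref_apply α hα x, sref_apply α hα, inner_sub_right, real_inner_smul_right,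
      div_mul_cancel₀ _ h']
    have h2 : 2 * (⟪α, x⟫ - 2 * ⟪α, x⟫) / ⟪α, α⟫ = -(2 * ⟪α, x⟫ / ⟪α, α⟫) := by ring
    rw [h2, neg_smul]
    abel

lemma sref_mul_self (α : V) : sref α * sref α = 1 := by
  refine LinearEquiv.ext fun x => ?_
  exact sref_sref α x

lemma sref_inv (α : V) : (sref α)⁻¹ = sref α :=
  inv_eq_of_mul_eq_one_right (sref_mul_self α)

lemma sref_neg (α : V) : sref (-α) = sref α := by
  by_cases hα : α = 0
  · rw [hα, neg_zero]
  · have h : -α ≠ 0 := neg_ne_zero.mpr hα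
    refine LinearEquiv.ext fun x => ?_
    rw [sref_apply _ h, sref_apply _ hα, inner_neg_left, inner_neg_neg, smul_neg]
    have h2 : 2 * -⟪α, x⟫ / ⟪α, α⟫ = -(2 * ⟪α, x⟫ / ⟪α, α⟫) := by ring
    rw [h2, neg_smul, neg_neg]

lemma sref_conj (g : V ≃ₗ[ℝ] V) (hg : ∀ x y, ⟪g x, g y⟫ = ⟪x, y⟫) (α : V) :
    sref (g α) = g * sref α * g⁻¹ := by
  by_cases hα : α = 0
  · refine LinearEquiv.ext fun x => ?_
    rw [hα, map_zero]
    rw [show sref (0 : V) = LinearEquiv.refl ℝ V by rw [sref, dif_pos rfl]]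
    simp only [mul_apply']
    show x = g ((LinearEquiv.refl ℝ V) (g⁻¹ x))
    rw [LinearEquiv.refl_apply, apply_inv_apply]
  · have hgα : g α ≠ 0 := by
      simp only [ne_eq, EmbeddingLike.map_eq_zero_iff]; exact hα
    refine LinearEquiv.ext fun x => ?_
    simp only [mul_apply']
    rw [sref_apply _ hgα, sref_apply _ hα]
    rw [map_sub, map_smul]
    have h1 : ⟪g α, g α⟫ = ⟪α, α⟫ := hg α α
    have h2 : ⟪g α, x⟫ = ⟪α, g⁻¹ x⟫ := by
      conv_lhs => rw [show x = g (g⁻¹ x) from (apply_inv_apply g x).symm]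
      exact hg α (g⁻¹ x)
    rw [h1, h2, apply_inv_apply]

lemma surj_on_finite {S : Set V} (hfin : S.Finite) (f : V → V)
    (hinj : Function.Injective f) (hmaps : ∀ x ∈ S, f x ∈ S) {y : V} (hy : y ∈ S) :
    ∃ x ∈ S, f x = y := by
  have hbij := (hfin.injOn_iff_bijOn_of_mapsTo hmaps).mp hinj.injOn
  obtain ⟨x, hx, hfx⟩ := hbij.surjOn hy
  exact ⟨x, hx, hfx⟩

lemma neg_inv_mem {S : Set V} (hfin : S.Finite) {w : V ≃ₗ[ℝ] V}
    (h : ∀ β ∈ S, -(w β) ∈ S) {β : V} (hβ : β ∈ S) : -(w⁻¹ β) ∈ S := by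
  have hinj : Function.Injective (fun x => -(w x)) := by
    intro a b hab
    simp only [neg_inj] at hab
    exact w.injective hab
  obtain ⟨γ, hγ, hfγ⟩ := surj_on_finite hfin (fun x => -(w x)) hinj h hβ
  have h1 : w γ = -β := by
    simpa [neg_eq_iff_eq_neg] using hfγ
  have h2 : w⁻¹ β = -γ := by
    rw [show β = -(w γ) by rw [h1, neg_neg], map_neg, inv_apply_apply]
  rw [h2, neg_neg]
  exact hγ

end AuxBasic
section AuxRS

set_option linter.unusedSectionVars false

variable {V : Type*} [NormedAddCommGroup V] [InnerProductSpace ℝ V]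
variable {n : ℕ} {Φ : Set V} {αs : Fin n → V} {Pos : Set V}

lemma coeffs_zero (hbase : IsBase Φ αs Pos) (f : Fin n → ℝ)
    (h : ∑ i, f i • αs i = 0) : ∀ i, f i = 0 :=
  Fintype.linearIndependent_iff.mp hbase.indep f h

lemma sum_smul_inj (hbase : IsBase Φ αs Pos) {f g : Fin n → ℝ}
    (h : ∑ i, f i • αs i = ∑ i, g i • αs i) : ∀ i, f i = g i := by
  have h0 : ∑ i, (f i - g i) • αs i = 0 := by
    simp only [sub_smul, Finset.sum_sub_distrib, h, sub_self]
  intro i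
  have := coeffs_zero hbase _ h0 i
  linarith

lemma root_ne_zero (hΦ : IsRootSystem Φ) {β : V} (hβ : β ∈ Φ) : β ≠ 0 :=
  fun h => hΦ.nonzero (h ▸ hβ)

lemma simple_mem_pos (hbase : IsBase Φ αs Pos) (i : Fin n) : αs i ∈ Pos := by
  rw [hbase.mem_pos_iff _ (hbase.mem i)]
  refine ⟨fun j => if j = i then 1 else 0, ?_⟩
  rw [Finset.sum_eq_single i]
  · simp
  · intro j _ hj; simp [hj]
  · simp

lemma neg_not_pos (hΦ : IsRootSystem Φ) (hbase : IsBase Φ αs Pos) {β : V}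
    (hβ : β ∈ Pos) : -β ∉ Pos := by
  intro hneg
  obtain ⟨c, hc⟩ := (hbase.mem_pos_iff _ (hbase.pos_subset hβ)).mp hβ
  obtain ⟨d, hd⟩ := (hbase.mem_pos_iff _ (hbase.pos_subset hneg)).mp hneg
  have hsum : ∑ i, ((c i : ℝ) + (d i : ℝ)) • αs i = 0 := by
    simp only [add_smul, Finset.sum_add_distrib]
    rw [← hc, ← hd]; abel
  have hall := coeffs_zero hbase _ hsum
  have hβ0 : β = 0 := by
    rw [hc]
    refine Finset.sum_eq_zero fun i _ => ?_
    have h1 : (c i : ℝ) = 0 := by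
      have := hall i
      have hc0 : (0:ℝ) ≤ (c i : ℝ) := Nat.cast_nonneg _
      have hd0 : (0:ℝ) ≤ (d i : ℝ) := Nat.cast_nonneg _
      linarith
    rw [h1, zero_smul]
  exact root_ne_zero hΦ (hbase.pos_subset hβ) hβ0

lemma neg_mem_pos (hbase : IsBase Φ αs Pos) {β : V} (hβ : β ∈ Φ)
    (h : β ∉ Pos) : -β ∈ Pos := (hbase.pos_or_neg β hβ).resolve_left h

/-- The product of the simple reflections along a word. -/
noncomputable def pw (αs : Fin n → V) (l : List (Fin n)) : V ≃ₗ[ℝ] V :=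
  (l.map fun i => sref (αs i)).prod

lemma pw_nil : pw αs ([] : List (Fin n)) = 1 := rfl

lemma pw_cons (a : Fin n) (t : List (Fin n)) :
    pw αs (a :: t) = sref (αs a) * pw αs t := by
  rw [pw, List.map_cons, List.prod_cons]; rfl

lemma pw_singleton (i : Fin n) : pw αs [i] = sref (αs i) := by
  rw [pw_cons]; rw [pw_nil, mul_one]

lemma pw_append (p q : List (Fin n)) : pw αs (p ++ q) = pw αs p * pw αs q := by
  rw [pw, pw, pw, List.map_append, List.prod_append]

lemma pw_inner (l : List (Fin n)) (x y : V) : ⟪pw αs l x, pw αs l y⟫ = ⟪x, y⟫ := by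
  induction l with
  | nil => rfl
  | cons a t ih => rw [pw_cons, mul_apply', mul_apply', sref_inner]; exact ih

lemma pw_root (hΦ : IsRootSystem Φ) (hbase : IsBase Φ αs Pos) (l : List (Fin n))
    {β : V} (hβ : β ∈ Φ) : pw αs l β ∈ Φ := by
  induction l with
  | nil => exact hβ
  | cons a t ih =>
    rw [pw_cons, mul_apply']
    exact hΦ.refl_mem _ (hbase.mem a) _ ih

lemma pw_reverse (l : List (Fin n)) : pw αs l.reverse = (pw αs l)⁻¹ := by
  induction l with
  | nil => rw [List.reverse_nil, pw_nil, inv_one]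
  | cons a t ih =>
    rw [List.reverse_cons, pw_append, pw_singleton, ih, pw_cons, mul_inv_rev, sref_inv]

lemma simple_refl_pos (hΦ : IsRootSystem Φ) (hbase : IsBase Φ αs Pos) {β : V}
    (hβ : β ∈ Pos) (i : Fin n) (hne : β ≠ αs i) : sref (αs i) β ∈ Pos := by
  have hβΦ := hbase.pos_subset hβ
  have hαne : αs i ≠ 0 := root_ne_zero hΦ (hbase.mem i)
  have hsΦ : sref (αs i) β ∈ Φ := hΦ.refl_mem _ (hbase.mem i) _ hβΦ
  by_contra h
  have hneg := neg_mem_pos hbase hsΦ h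
  obtain ⟨c, hc⟩ := (hbase.mem_pos_iff _ hβΦ).mp hβ
  obtain ⟨d, hd⟩ := (hbase.mem_pos_iff _ (hbase.pos_subset hneg)).mp hneg
  set k : ℝ := 2 * ⟪αs i, β⟫ / ⟪αs i, αs i⟫ with hk
  have hs : sref (αs i) β = β - k • αs i := sref_apply _ hαne β
  have hsum : ∑ j, ((c j : ℝ) + (d j : ℝ) - (if j = i then k else 0)) • αs j = 0 := by
    simp only [sub_smul, add_smul, Finset.sum_sub_distrib, Finset.sum_add_distrib]
    have hite : ∑ j, (if j = i then k else 0) • αs j = k • αs i := by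
      rw [Finset.sum_eq_single i]
      · simp
      · intro j _ hj; simp [hj]
      · simp
    rw [hite, ← hc, ← hd, hs]
    abel
  have hall := coeffs_zero hbase _ hsum
  have hj0 : ∀ j, j ≠ i → (c j : ℝ) = 0 := by
    intro j hj
    have := hall j
    rw [if_neg hj] at this
    have hc0 : (0:ℝ) ≤ (c j : ℝ) := Nat.cast_nonneg _
    have hd0 : (0:ℝ) ≤ (d j : ℝ) := Nat.cast_nonneg _
    linarith
  have hβi : β = (c i : ℝ) • αs i := by
    rw [hc, Finset.sum_eq_single i]
    · intro j _ hj; rw [hj0 j hj, zero_smul]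
    · intro hni; exact absurd (Finset.mem_univ i) hni
  rcases hΦ.reduced (αs i) (hbase.mem i) (c i : ℝ) (by rw [← hβi]; exact hβΦ) with h1 | h1
  · rw [h1, one_smul] at hβi; exact hne hβi
  · have : (0:ℝ) ≤ (c i : ℝ) := Nat.cast_nonneg _
    rw [h1] at this; linarith

lemma exists_flip (l : List (Fin n)) (x : V) (hnp : x ∉ Pos)
    (hp : pw αs l x ∈ Pos) :
    ∃ (p : List (Fin n)) (i : Fin n) (q : List (Fin n)), l = p ++ i :: q ∧ pw αs (i :: q) x ∈ Pos ∧ pw αs q x ∉ Pos := by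
  induction l with
  | nil => exact absurd hp hnp
  | cons a t ih =>
    by_cases h : pw αs t x ∈ Pos
    · obtain ⟨p, i, q, heq, h1, h2⟩ := ih h
      exact ⟨a :: p, i, q, by rw [heq]; rfl, h1, h2⟩
    · exact ⟨[], a, t, rfl, hp, h⟩

lemma word_pos_eq_one (hΦ : IsRootSystem Φ) (hbase : IsBase Φ αs Pos) :
    ∀ (k : ℕ) (l : List (Fin n)), l.length ≤ k →
      (∀ β ∈ Pos, pw αs l β ∈ Pos) → pw αs l = 1 := by
  intro k
  induction k with
  | zero =>
    intro l hlen _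
    rw [List.length_eq_zero_iff.mp (Nat.le_zero.mp hlen)]
    rfl
  | succ k ih =>
    intro l hlen hpos
    rcases List.eq_nil_or_concat' l with rfl | ⟨l₁, j, rfl⟩
    · rfl
    · have hαne : αs j ≠ 0 := root_ne_zero hΦ (hbase.mem j)
      have hαpos : αs j ∈ Pos := simple_mem_pos hbase j
      have hxΦ : -αs j ∈ Φ := hΦ.neg_mem _ (hbase.mem j)
      have hxnp : -αs j ∉ Pos := neg_not_pos hΦ hbase hαpos
      have h1 : pw αs l₁ (-αs j) ∈ Pos := by
        have h2 : pw αs (l₁ ++ [j]) (αs j) ∈ Pos := hpos _ hαpos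
        rw [pw_append, mul_apply', pw_singleton, sref_self _ hαne] at h2
        exact h2
      obtain ⟨p, i, q, heq, hPos, hNeg⟩ := exists_flip l₁ (-αs j) hxnp h1
      have hqΦ : pw αs q (-αs j) ∈ Φ := pw_root hΦ hbase q hxΦ
      have hγpos : pw αs q (αs j) ∈ Pos := by
        have h3 := neg_mem_pos hbase hqΦ hNeg
        rw [map_neg, neg_neg] at h3
        exact h3
      have h4 : sref (αs i) (pw αs q (αs j)) = -(pw αs (i :: q) (-αs j)) := by
        rw [pw_cons, mul_apply', map_neg, map_neg, neg_neg]
      have h5 : sref (αs i) (pw αs q (αs j)) ∉ Pos := by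
        rw [h4]
        exact neg_not_pos hΦ hbase hPos
      have hγα : pw αs q (αs j) = αs i := by
        by_contra hne
        exact h5 (simple_refl_pos hΦ hbase hγpos i hne)
      have hconj : sref (αs i) = pw αs q * sref (αs j) * (pw αs q)⁻¹ := by
        rw [← hγα]
        exact sref_conj (pw αs q) (pw_inner q) (αs j)
      have hword : pw αs (l₁ ++ [j]) = pw αs (p ++ q) := by
        rw [heq, pw_append, pw_append, pw_append, pw_cons, pw_singleton, hconj]
        simp only [mul_assoc]
        rw [inv_mul_cancel_left, sref_mul_self, mul_one]
      have hlen2 : (p ++ q).length ≤ k := by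
        have e1 : l₁.length + 1 ≤ k + 1 := by
          simpa using hlen
        have e2 : l₁.length = p.length + q.length + 1 := by
          rw [heq]; simp [List.length_append]; omega
        simp only [List.length_append]
        omega
      have hfin := ih (p ++ q) hlen2 (by intro β hβ; rw [← hword]; exact hpos β hβ)
      rw [hword, hfin]

end AuxRS
section AuxWords

set_option linter.unusedSectionVars false

variable {V : Type*} [NormedAddCommGroup V] [InnerProductSpace ℝ V]
variable {n : ℕ} {Φ : Set V} {αs : Fin n → V} {Pos : Set V}

lemma sref_pos_word (hΦ : IsRootSystem Φ) (hbase : IsBase Φ αs Pos) :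
    ∀ (h : ℕ) (β : V), β ∈ Pos → ∀ c : Fin n → ℕ, β = ∑ i, (c i : ℝ) • αs i →
      (∑ i, c i) = h → ∃ l : List (Fin n), pw αs l = sref β := by
  intro h
  induction h using Nat.strong_induction_on with
  | _ h ih =>
    intro β hβ c hc hsum
    by_cases hsimple : ∃ i, β = αs i
    · obtain ⟨i, rfl⟩ := hsimple
      exact ⟨[i], pw_singleton i⟩
    · push_neg at hsimple
      have hβΦ := hbase.pos_subset hβ
      have hβne := root_ne_zero hΦ hβΦ
      have hpos : (0:ℝ) < ⟪β, β⟫ := inner_self_pos' hβne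
      have hinner : ⟪β, β⟫ = ∑ i, (c i : ℝ) * ⟪αs i, β⟫ := by
        nth_rewrite 1 [hc]
        rw [sum_inner]
        simp_rw [real_inner_smul_left]
      have hex : ∃ i, 0 < (c i : ℝ) * ⟪αs i, β⟫ := by
        by_contra hA
        push_neg at hA
        have : ⟪β, β⟫ ≤ 0 := hinner ▸ Finset.sum_nonpos (fun i _ => hA i)
        linarith
      obtain ⟨i, hi⟩ := hex
      have hαβ : 0 < ⟪αs i, β⟫ := by
        rcases le_or_gt ⟪αs i, β⟫ 0 with h' | h'
        · exfalso
          have hcn : (0:ℝ) ≤ (c i : ℝ) := Nat.cast_nonneg _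
          nlinarith
        · exact h'
      have hαne : αs i ≠ 0 := root_ne_zero hΦ (hbase.mem i)
      have hααpos : (0:ℝ) < ⟪αs i, αs i⟫ := inner_self_pos' hαne
      set k : ℝ := 2 * ⟪αs i, β⟫ / ⟪αs i, αs i⟫ with hk
      have hkpos : 0 < k := div_pos (by linarith) hααpos
      obtain ⟨m, hm⟩ := hΦ.crystallographic β hβΦ (αs i) (hbase.mem i)
      have hkm : k = (m : ℝ) := by rw [hk, real_inner_comm]; exact hm
      have hmpos : 0 < m := by
        have : (0:ℝ) < (m:ℝ) := hkm ▸ hkpos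
        exact_mod_cast this
      have hm1 : (1:ℝ) ≤ k := by
        rw [hkm]
        exact_mod_cast hmpos
      have hne : β ≠ αs i := hsimple i
      have hβ' : sref (αs i) β ∈ Pos := simple_refl_pos hΦ hbase hβ i hne
      have hs : sref (αs i) β = β - k • αs i := sref_apply _ hαne β
      obtain ⟨d, hd⟩ := (hbase.mem_pos_iff _ (hbase.pos_subset hβ')).mp hβ'
      have hcomb : ∑ j, ((c j : ℝ) - (if j = i then k else 0)) • αs j = sref (αs i) β := by
        simp only [sub_smul, Finset.sum_sub_distrib]
        have hite : ∑ j, (if j = i then k else 0) • αs j = k • αs i := by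
          rw [Finset.sum_eq_single i]
          · simp
          · intro j _ hj; simp [hj]
          · simp
        rw [hite, ← hc, hs]
      have hcoeff : ∀ j, (d j : ℝ) = (c j : ℝ) - (if j = i then k else 0) := by
        apply sum_smul_inj hbase
        rw [hcomb, ← hd]
      have hdlt : (∑ j, d j) < h := by
        have h1 : ∑ j, (d j : ℝ) = (∑ j, (c j : ℝ)) - k := by
          rw [Finset.sum_congr rfl (fun j _ => hcoeff j), Finset.sum_sub_distrib]
          congr 1
          exact Fintype.sum_ite_eq' i (fun _ => k)
        have h2 : ((∑ j, d j : ℕ) : ℝ) < ((∑ j, c j : ℕ) : ℝ) := by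
          push_cast
          rw [h1]
          linarith
        rw [← hsum]
        exact_mod_cast h2
      obtain ⟨l', hl'⟩ := ih _ hdlt _ hβ' d hd rfl
      refine ⟨i :: (l' ++ [i]), ?_⟩
      rw [pw_cons, pw_append, pw_singleton, hl']
      have hconj : sref (sref (αs i) β) = sref (αs i) * sref β * (sref (αs i))⁻¹ :=
        sref_conj _ (sref_inner _) β
      rw [hconj, sref_inv]
      simp only [mul_assoc]
      rw [sref_mul_self, mul_one, ← mul_assoc, sref_mul_self, one_mul]

lemma sref_root_word (hΦ : IsRootSystem Φ) (hbase : IsBase Φ αs Pos) {β : V}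
    (hβ : β ∈ Φ) : ∃ l : List (Fin n), pw αs l = sref β := by
  rcases hbase.pos_or_neg β hβ with h | h
  · obtain ⟨c, hc⟩ := (hbase.mem_pos_iff _ hβ).mp h
    exact sref_pos_word hΦ hbase _ β h c hc rfl
  · obtain ⟨c, hc⟩ := (hbase.mem_pos_iff _ (hΦ.neg_mem β hβ)).mp h
    obtain ⟨l, hl⟩ := sref_pos_word hΦ hbase _ (-β) h c hc rfl
    exact ⟨l, by rw [hl, sref_neg]⟩

lemma weyl_word (hΦ : IsRootSystem Φ) (hbase : IsBase Φ αs Pos) {w : V ≃ₗ[ℝ] V}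
    (hw : w ∈ weylGroup Φ) : ∃ l : List (Fin n), pw αs l = w := by
  refine Subgroup.closure_induction
    (p := fun w _ => ∃ l : List (Fin n), pw αs l = w) ?_ ?_ ?_ ?_ hw
  · rintro x ⟨β, hβ, rfl⟩
    exact sref_root_word hΦ hbase hβ
  · exact ⟨[], rfl⟩
  · rintro x y _ _ ⟨lx, hlx⟩ ⟨ly, hly⟩
    exact ⟨lx ++ ly, by rw [pw_append, hlx, hly]⟩
  · rintro x _ ⟨l, hl⟩
    exact ⟨l.reverse, by rw [pw_reverse, hl]⟩

lemma parab_word {ω : Fin n → V} (hω : ∀ i j, ⟪ω i, αs j⟫ = if i = j then 1 else 0)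
    {i0 : Fin n} {w : V ≃ₗ[ℝ] V} (hw : w ∈ parab αs {j | j ≠ i0}) :
    (∃ l : List (Fin n), pw αs l = w) ∧ w (ω i0) = ω i0 := by
  refine Subgroup.closure_induction
    (p := fun w _ => (∃ l : List (Fin n), pw αs l = w) ∧ w (ω i0) = ω i0) ?_ ?_ ?_ ?_ hw
  · rintro x ⟨j, hj, rfl⟩
    refine ⟨⟨[j], pw_singleton j⟩, sref_orth _ _ ?_⟩
    rw [real_inner_comm, hω i0 j, if_neg (fun h => hj h.symm)]
  · exact ⟨⟨[], rfl⟩, rfl⟩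
  · rintro x y _ _ ⟨⟨lx, hlx⟩, hx⟩ ⟨⟨ly, hly⟩, hy⟩
    exact ⟨⟨lx ++ ly, by rw [pw_append, hlx, hly]⟩, by rw [mul_apply', hy, hx]⟩
  · rintro x _ ⟨⟨l, hl⟩, hx⟩
    refine ⟨⟨l.reverse, by rw [pw_reverse, hl]⟩, ?_⟩
    have h2 : x⁻¹ (x (ω i0)) = x⁻¹ (ω i0) := congrArg _ hx
    rw [inv_apply_apply] at h2
    exact h2.symm

end AuxWords
section AuxPolar

set_option linter.unusedSectionVars false

variable {V : Type*} [NormedAddCommGroup V] [InnerProductSpace ℝ V]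
variable {n : ℕ} {Φ : Set V} {αs : Fin n → V} {Pos : Set V} {ω : Fin n → V}
  {φ : V} {i0 : Fin n}

lemma inner_sum_omega (hω : ∀ i j, ⟪ω i, αs j⟫ = if i = j then 1 else 0)
    (f : Fin n → ℝ) : ⟪∑ i, f i • αs i, ω i0⟫ = f i0 := by
  rw [sum_inner]
  have h : ∀ i, ⟪f i • αs i, ω i0⟫ = if i = i0 then f i else 0 := by
    intro i
    rw [real_inner_smul_left, real_inner_comm, hω i0 i]
    by_cases h' : i = i0
    · subst h'; simp
    · rw [if_neg (fun h => h' h.symm), if_neg h', mul_zero]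
  simp only [h]
  exact Fintype.sum_ite_eq' i0 f

lemma pos_omega_nonneg (hbase : IsBase Φ αs Pos)
    (hω : ∀ i j, ⟪ω i, αs j⟫ = if i = j then 1 else 0) {β : V} (hβ : β ∈ Pos) :
    0 ≤ ⟪β, ω i0⟫ := by
  obtain ⟨c, hc⟩ := (hbase.mem_pos_iff _ (hbase.pos_subset hβ)).mp hβ
  rw [hc, inner_sum_omega hω]
  exact Nat.cast_nonneg _

lemma root_mem_pos_of_omega_pos (hbase : IsBase Φ αs Pos)
    (hω : ∀ i j, ⟪ω i, αs j⟫ = if i = j then 1 else 0) {β : V} (hβ : β ∈ Φ)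
    (h : 0 < ⟪β, ω i0⟫) : β ∈ Pos := by
  rcases hbase.pos_or_neg β hβ with h' | h'
  · exact h'
  · have := pos_omega_nonneg (i0 := i0) hbase hω h'
    rw [inner_neg_left] at this
    linarith

lemma omega_ne_zero (hω : ∀ i j, ⟪ω i, αs j⟫ = if i = j then 1 else 0) :
    ω i0 ≠ 0 := by
  intro h
  have := hω i0 i0
  rw [h, inner_zero_left, if_pos rfl] at this
  exact one_ne_zero this.symm

lemma phi_eq (hΦ : IsRootSystem Φ) (hbase : IsBase Φ αs Pos)
    (hω : ∀ i j, ⟪ω i, αs j⟫ = if i = j then 1 else 0)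
    (hφ : IsHighestRoot αs Pos φ)
    (hpolar : ⟪αs i0, φ⟫ ≠ 0 ∧ ∀ i, i ≠ i0 → ⟪αs i, φ⟫ = 0) :
    ∃ cφ : ℝ, 0 < cφ ∧ φ = cφ • ω i0 := by
  have hφΦ : φ ∈ Φ := hbase.pos_subset hφ.1
  have hωne : ω i0 ≠ 0 := omega_ne_zero hω
  have hω2 : (0:ℝ) < ⟪ω i0, ω i0⟫ := inner_self_pos' hωne
  set cφ : ℝ := ⟪φ, ω i0⟫ / ⟪ω i0, ω i0⟫ with hcφ
  set x : V := φ - cφ • ω i0 with hxdef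
  let B : Module.Basis (Fin n) ℝ V := Module.Basis.mk hbase.indep (by rw [hbase.span_eq])
  have h2B : ∀ i, B i = αs i := fun i => Module.Basis.mk_apply _ _ i
  have hx : x = ∑ i, B.repr x i • αs i := by
    have h1 := B.sum_repr x
    simp_rw [h2B] at h1
    exact h1.symm
  have h1 : ⟪x, ω i0⟫ = 0 := by
    rw [hxdef, inner_sub_left, real_inner_smul_left, hcφ]
    field_simp
    ring
  have h2 : B.repr x i0 = 0 := by
    rw [← inner_sum_omega (i0 := i0) hω (fun i => B.repr x i), ← hx]
    exact h1
  have h3 : ∀ j, j ≠ i0 → ⟪x, αs j⟫ = 0 := by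
    intro j hj
    rw [hxdef, inner_sub_left, real_inner_smul_left]
    rw [real_inner_comm (αs j) φ]
    rw [hpolar.2 j hj, hω i0 j, if_neg (fun h => hj h.symm)]
    ring
  have h4 : ⟪x, x⟫ = 0 := by
    nth_rewrite 2 [hx]
    rw [inner_sum]
    refine Finset.sum_eq_zero fun i _ => ?_
    by_cases hi : i = i0
    · rw [hi, real_inner_smul_right, h2]; ring
    · rw [real_inner_smul_right, h3 i hi]; ring
  have hx0 : x = 0 := inner_self_eq_zero.mp h4
  have hφeq : φ = cφ • ω i0 := by
    have := sub_eq_zero.mp hx0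
    exact this
  refine ⟨cφ, ?_, hφeq⟩
  have hnn : 0 ≤ ⟪φ, ω i0⟫ := pos_omega_nonneg hbase hω hφ.1
  rcases lt_or_eq_of_le hnn with h' | h'
  · exact div_pos h' hω2
  · exfalso
    have : cφ = 0 := by rw [hcφ, ← h', zero_div]
    rw [this, zero_smul] at hφeq
    exact root_ne_zero hΦ hφΦ hφeq

end AuxPolar
section AuxKey

set_option linter.unusedSectionVars false

variable {V : Type*} [NormedAddCommGroup V] [InnerProductSpace ℝ V]
variable {n : ℕ} {Φ : Set V} {αs : Fin n → V} {Pos : Set V} {ω : Fin n → V}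
  {φ : V} {i0 : Fin n}

lemma key_cases (hΦ : IsRootSystem Φ) (hbase : IsBase Φ αs Pos)
    (hω : ∀ i j, ⟪ω i, αs j⟫ = if i = j then 1 else 0)
    (hφ : IsHighestRoot αs Pos φ)
    (hpolar : ⟪αs i0, φ⟫ ≠ 0 ∧ ∀ i, i ≠ i0 → ⟪αs i, φ⟫ = 0)
    {β : V} (hβ : β ∈ Pos) :
    (⟪β, ω i0⟫ = 0 ∧ sref φ β = β) ∨
    (0 < ⟪β, ω i0⟫ ∧ ∃ δ, δ ∈ Pos ∧ 0 < ⟪δ, ω i0⟫ ∧ sref φ β = -δ) := by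
  obtain ⟨cφ, hcφ, hφω⟩ := phi_eq hΦ hbase hω hφ hpolar
  have hφPos := hφ.1
  have hφΦ : φ ∈ Φ := hbase.pos_subset hφPos
  have hβΦ : β ∈ Φ := hbase.pos_subset hβ
  have hφne : φ ≠ 0 := root_ne_zero hΦ hφΦ
  have hβne0 : β ≠ 0 := root_ne_zero hΦ hβΦ
  have hs : (0:ℝ) < ⟪φ, φ⟫ := inner_self_pos' hφne
  have hrel : ∀ x : V, ⟪φ, x⟫ = cφ * ⟪x, ω i0⟫ := by
    intro x
    rw [hφω, real_inner_smul_left, real_inner_comm]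
  obtain ⟨m, hm⟩ := hΦ.crystallographic β hβΦ φ hφΦ
  have hβφ : ⟪β, φ⟫ = cφ * ⟪β, ω i0⟫ := by rw [real_inner_comm]; exact hrel β
  have hβω : 0 ≤ ⟪β, ω i0⟫ := pos_omega_nonneg hbase hω hβ
  have hφωpos : 0 < ⟪φ, ω i0⟫ := by
    have h1 : cφ * ⟪φ, ω i0⟫ = ⟪φ, φ⟫ := (hrel φ).symm
    by_contra hcon
    push_neg at hcon
    have h2 : cφ * ⟪φ, ω i0⟫ ≤ 0 := mul_nonpos_of_nonneg_of_nonpos hcφ.le hcon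
    linarith
  have hm0 : 0 ≤ m := by
    have h1 : (0:ℝ) ≤ 2 * ⟪β, φ⟫ / ⟪φ, φ⟫ := by
      apply div_nonneg _ hs.le
      nlinarith
    rw [hm] at h1
    exact_mod_cast h1
  have hm2 : m ≤ 2 := by
    obtain ⟨c, hc⟩ := hφ.2 β hβ
    have h1 : 0 ≤ ⟪φ - β, ω i0⟫ := by rw [hc, inner_sum_omega hω]; exact Nat.cast_nonneg _
    have h2 : ⟪φ, φ - β⟫ = cφ * ⟪φ - β, ω i0⟫ := hrel _
    have h3 : 0 ≤ ⟪φ, φ - β⟫ := by nlinarith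
    rw [inner_sub_right] at h3
    have h4 : 2 * ⟪β, φ⟫ / ⟪φ, φ⟫ ≤ 2 := by
      rw [div_le_iff₀ hs, real_inner_comm φ β]
      linarith
    rw [hm] at h4
    exact_mod_cast h4
  have hsref : sref φ β = β - (2 * ⟪φ, β⟫ / ⟪φ, φ⟫) • φ := sref_apply φ hφne β
  have hφβ : ⟪φ, β⟫ = ⟪β, φ⟫ := real_inner_comm β φ
  have hmtri : m = 0 ∨ m = 1 ∨ m = 2 := by omega
  rcases hmtri with rfl | rfl | rfl
  · -- m = 0
    push_cast at hm
    have h5 : ⟪β, φ⟫ = 0 := by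
      rcases div_eq_zero_iff.mp hm with h | h
      · linarith
      · exact absurd h hs.ne'
    left
    constructor
    · have h6 : cφ * ⟪β, ω i0⟫ = 0 := by rw [← hβφ]; exact h5
      rcases mul_eq_zero.mp h6 with h | h
      · exact absurd h hcφ.ne'
      · exact h
    · rw [hsref, hφβ, h5]
      simp
  · -- m = 1
    push_cast at hm
    have h5 : ⟪β, φ⟫ = ⟪φ, φ⟫ / 2 := by
      field_simp at hm
      linarith
    have hβωpos : 0 < ⟪β, ω i0⟫ := by
      rcases hβω.lt_or_eq with h | h
      · exact h
      · exfalso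
        rw [← h, mul_zero] at hβφ
        nlinarith
    have hcoe : 2 * ⟪φ, β⟫ / ⟪φ, φ⟫ = 1 := by
      rw [hφβ, h5]
      field_simp
    have hsref' : sref φ β = β - φ := by rw [hsref, hcoe, one_smul]
    have h6 : φ - β ∈ Φ := by
      have h7 := hΦ.refl_mem φ hφΦ β hβΦ
      rw [hsref'] at h7
      have h8 := hΦ.neg_mem _ h7
      rw [neg_sub] at h8
      exact h8
    have hβωi : cφ * ⟪β, ω i0⟫ = ⟪φ, φ⟫ / 2 := by rw [← hβφ, h5]
    have hφωi : cφ * ⟪φ, ω i0⟫ = ⟪φ, φ⟫ := (hrel φ).symm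
    have hδω : 0 < ⟪φ - β, ω i0⟫ := by
      rw [inner_sub_left]
      by_contra hcon
      push_neg at hcon
      have h9 : cφ * (⟪φ, ω i0⟫ - ⟪β, ω i0⟫) ≤ 0 :=
        mul_nonpos_of_nonneg_of_nonpos hcφ.le (by linarith)
      rw [mul_sub] at h9
      linarith
    have hδPos : φ - β ∈ Pos := root_mem_pos_of_omega_pos hbase hω h6 hδω
    right
    exact ⟨hβωpos, φ - β, hδPos, hδω, by rw [neg_sub]; exact hsref'⟩
  · -- m = 2
    push_cast at hm
    have h5 : ⟪β, φ⟫ = ⟪φ, φ⟫ := by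
      field_simp at hm
      linarith
    have hβeq : β = φ := by
      by_contra hne
      set γ : V := φ - β with hγdef
      have hγne : γ ≠ 0 := sub_ne_zero.mpr (fun h => hne h.symm)
      have hg : (0:ℝ) < ⟪γ, γ⟫ := inner_self_pos' hγne
      have hγφ : ⟪φ, γ⟫ = 0 := by
        rw [hγdef, inner_sub_right, hφβ, h5]
        ring
      have hβγ : β = φ - γ := by rw [hγdef]; abel
      have hββ : ⟪β, β⟫ = ⟪φ, φ⟫ + ⟪γ, γ⟫ := by
        rw [hβγ, real_inner_sub_sub_self, hγφ]
        ring
      obtain ⟨m', hm'⟩ := hΦ.crystallographic φ hφΦ β hβΦ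
      have hc1 : (0:ℝ) < (m' : ℝ) := by
        rw [← hm']
        apply div_pos
        · rw [hφβ, h5]; linarith
        · rw [hββ]; linarith
      have hc2 : ((m' : ℝ)) < 2 := by
        rw [← hm', hφβ, h5, hββ, div_lt_iff₀ (by linarith)]
        linarith
      have hm'1 : m' = 1 := by
        have c1 : 0 < m' := by exact_mod_cast hc1
        have c2 : m' < 2 := by exact_mod_cast hc2
        omega
      rw [hm'1] at hm'
      push_cast at hm'
      have h9 : sref β φ = γ := by
        rw [sref_apply β hβne0 φ, real_inner_comm φ β, hm', one_smul, hγdef]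
      have h7 : γ ∈ Φ := by
        have := hΦ.refl_mem β hβΦ φ hφΦ
        rw [h9] at this
        exact this
      have hγβ : ⟪γ, β⟫ = -⟪γ, γ⟫ := by
        rw [hβγ, inner_sub_right, real_inner_comm φ γ, hγφ]
        ring
      have hcoef : 2 * ⟪γ, β⟫ / ⟪γ, γ⟫ = -2 := by
        rw [hγβ]
        field_simp
      have h11 : sref γ β = φ + γ := by
        rw [sref_apply γ hγne β, hcoef, hβγ]
        module
      have h10 : φ + γ ∈ Φ := by
        have := hΦ.refl_mem γ h7 β hβΦ
        rw [h11] at this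
        exact this
      obtain ⟨a, ha⟩ := (hbase.mem_pos_iff _ hφΦ).mp hφPos
      obtain ⟨c, hcγ⟩ := hφ.2 β hβ
      rw [← hγdef] at hcγ
      have hφγPos : φ + γ ∈ Pos := by
        rw [hbase.mem_pos_iff _ h10]
        refine ⟨fun i => a i + c i, ?_⟩
        push_cast
        simp only [add_smul, Finset.sum_add_distrib]
        rw [← ha, ← hcγ]
      obtain ⟨e, he⟩ := hφ.2 (φ + γ) hφγPos
      have he' : -γ = ∑ i, (e i : ℝ) • αs i := by
        rw [← he]
        abel
      have hzero : ∑ i, ((c i : ℝ) + (e i : ℝ)) • αs i = 0 := by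
        simp only [add_smul, Finset.sum_add_distrib]
        rw [← hcγ, ← he']
        abel
      have hall := coeffs_zero hbase _ hzero
      have hγ0 : γ = 0 := by
        rw [hcγ]
        refine Finset.sum_eq_zero fun i _ => ?_
        have h12 := hall i
        have hc0 : (0:ℝ) ≤ (c i : ℝ) := Nat.cast_nonneg _
        have he0 : (0:ℝ) ≤ (e i : ℝ) := Nat.cast_nonneg _
        have : (c i : ℝ) = 0 := by linarith
        rw [this, zero_smul]
      exact hγne hγ0
    right
    subst hβeq
    exact ⟨hφωpos, β, hφPos, hφωpos, by rw [sref_self β hφne]⟩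

end AuxKey
theorem statement9 {n : ℕ} (Φ : Set V) (hΦ : IsRootSystem Φ)
    (αs : Fin n → V) (Pos : Set V) (hbase : IsBase Φ αs Pos)
    (htype : ((n = 6 ∨ n = 7 ∨ n = 8) ∧ CartanIs αs cartanE) ∨
      (n = 4 ∧ CartanIs αs cartanF))
    (ω : Fin n → V) (hω : ∀ i j, ⟪ω i, αs j⟫ = if i = j then 1 else 0)
    (φ : V) (hφ : IsHighestRoot αs Pos φ)
    (i0 : Fin n) (hpolar : ⟪αs i0, φ⟫ ≠ 0 ∧ ∀ i, i ≠ i0 → ⟪αs i, φ⟫ = 0)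
    (w₀ : V ≃ₗ[ℝ] V) (hw₀mem : w₀ ∈ weylGroup Φ) (hw₀ : ∀ β ∈ Pos, -(w₀ β) ∈ Pos)
    (w₁ : V ≃ₗ[ℝ] V) (hw₁mem : w₁ ∈ parab αs {j | j ≠ i0})
    (hw₁ : ∀ β ∈ Pos, ⟪β, ω i0⟫ = 0 → -(w₁ β) ∈ Pos) :
    sref φ = w₁ * w₀ ∧
      invSet Pos (sref φ) = {β ∈ Pos | 0 < ⟪β, ω i0⟫} ∧
      invSet Pos (w₁ * w₀) = {β ∈ Pos | 0 < ⟪β, ω i0⟫} := by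
  classical
  have hφPos := hφ.1
  have hφΦ : φ ∈ Φ := hbase.pos_subset hφPos
  have hφne : φ ≠ 0 := root_ne_zero hΦ hφΦ
  have hinv : invSet Pos (sref φ) = {β ∈ Pos | 0 < ⟪β, ω i0⟫} := by
    ext β
    simp only [invSet, Set.mem_setOf_eq, sref_inv]
    constructor
    · rintro ⟨hβPos, hβinv⟩
      refine ⟨hβPos, ?_⟩
      rcases key_cases hΦ hbase hω hφ hpolar hβPos with ⟨h0, heq⟩ | ⟨hposβ, _⟩
      · rw [heq] at hβinv
        exact absurd hβinv (neg_not_pos hΦ hbase hβPos)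
      · exact hposβ
    · rintro ⟨hβPos, hposβ⟩
      refine ⟨hβPos, ?_⟩
      rcases key_cases hΦ hbase hω hφ hpolar hβPos with ⟨h0, _⟩ | ⟨_, δ, hδPos, _, heq⟩
      · rw [h0] at hposβ; exact absurd hposβ (lt_irrefl 0)
      · rw [heq, neg_neg]; exact hδPos
  obtain ⟨l₀, hl₀⟩ := weyl_word hΦ hbase hw₀mem
  obtain ⟨⟨l₁, hl₁⟩, hw₁ω⟩ := parab_word hω hw₁mem
  obtain ⟨lφ, hlφ⟩ := sref_root_word hΦ hbase hφΦ
  have hPosFin : Pos.Finite := hΦ.finite.subset hbase.pos_subset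
  have hw₀inv : ∀ β ∈ Pos, -(w₀⁻¹ β) ∈ Pos := fun β hβ => neg_inv_mem hPosFin hw₀ hβ
  have hw₁inner : ∀ x y, ⟪w₁ x, w₁ y⟫ = ⟪x, y⟫ := by
    intro x y; rw [← hl₁]; exact pw_inner l₁ x y
  have hw₁invΦ : ∀ β ∈ Φ, w₁⁻¹ β ∈ Φ := by
    intro β hβ
    rw [← hl₁, ← pw_reverse]
    exact pw_root hΦ hbase _ hβ
  have hN₀fin : Set.Finite {β | β ∈ Pos ∧ ⟪β, ω i0⟫ = 0} :=
    hPosFin.subset (fun β hβ => hβ.1)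
  have hw₁N₀ : ∀ β ∈ {β | β ∈ Pos ∧ ⟪β, ω i0⟫ = 0},
      -(w₁ β) ∈ {β | β ∈ Pos ∧ ⟪β, ω i0⟫ = 0} := by
    rintro β ⟨hβPos, hβ0⟩
    refine ⟨hw₁ β hβPos hβ0, ?_⟩
    rw [inner_neg_left]
    have h3 : ⟪w₁ β, ω i0⟫ = ⟪β, ω i0⟫ := by
      calc ⟪w₁ β, ω i0⟫ = ⟪w₁ β, w₁ (ω i0)⟫ := by rw [hw₁ω]
        _ = ⟪β, ω i0⟫ := hw₁inner β (ω i0)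
    rw [h3, hβ0, neg_zero]
  have hw₁invN₀ : ∀ β ∈ {β | β ∈ Pos ∧ ⟪β, ω i0⟫ = 0},
      -(w₁⁻¹ β) ∈ {β | β ∈ Pos ∧ ⟪β, ω i0⟫ = 0} :=
    fun β hβ => neg_inv_mem hN₀fin hw₁N₀ hβ
  have hw₁invPos : ∀ δ ∈ Pos, 0 < ⟪δ, ω i0⟫ → w₁⁻¹ δ ∈ Pos := by
    intro δ hδ hδω
    apply root_mem_pos_of_omega_pos hbase hω (hw₁invΦ δ (hbase.pos_subset hδ))
    have h3 : ⟪w₁⁻¹ δ, ω i0⟫ = ⟪δ, ω i0⟫ := by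
      calc ⟪w₁⁻¹ δ, ω i0⟫ = ⟪w₁ (w₁⁻¹ δ), w₁ (ω i0)⟫ := (hw₁inner _ _).symm
        _ = ⟪δ, ω i0⟫ := by rw [apply_inv_apply, hw₁ω]
    rw [h3]; exact hδω
  have hu_word : pw αs ((l₁ ++ l₀).reverse ++ lφ) = (w₁ * w₀)⁻¹ * sref φ := by
    rw [pw_append, pw_reverse, pw_append, hl₁, hl₀, hlφ]
  have hu_pos : ∀ β ∈ Pos, ((w₁ * w₀)⁻¹ * sref φ) β ∈ Pos := by
    intro β hβ
    have happ : ((w₁ * w₀)⁻¹ * sref φ) β = w₀⁻¹ (w₁⁻¹ (sref φ β)) := by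
      rw [mul_apply', mul_inv_rev, mul_apply']
    rcases key_cases hΦ hbase hω hφ hpolar hβ with ⟨h0, heq⟩ | ⟨_, δ, hδPos, hδω, heq⟩
    · rw [happ, heq]
      have h1 : -(w₁⁻¹ β) ∈ {β | β ∈ Pos ∧ ⟪β, ω i0⟫ = 0} := hw₁invN₀ β ⟨hβ, h0⟩
      have h2 : w₀⁻¹ (w₁⁻¹ β) = -(-(w₀⁻¹ (w₁⁻¹ β))) := (neg_neg _).symm
      rw [h2, ← map_neg]
      exact hw₀inv _ h1.1
    · rw [happ, heq, map_neg, map_neg]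
      exact hw₀inv _ (hw₁invPos δ hδPos hδω)
  have hu1 : (w₁ * w₀)⁻¹ * sref φ = 1 := by
    rw [← hu_word]
    refine word_pos_eq_one hΦ hbase _ _ le_rfl ?_
    intro β hβ
    rw [hu_word]
    exact hu_pos β hβ
  have hmain : sref φ = w₁ * w₀ := (inv_mul_eq_one.mp hu1).symm
  refine ⟨hmain, hinv, ?_⟩
  rw [← hmain]
  exact hinv


end Paper
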